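/- arXiv:2411.17166 — 2 statements merged into one kernel-verified Lean document; each statement's English description precedes it below -/
import Mathlib

section
/- Define f(w) = Im(conj(w)·√(D_p(w)))/Im(w) for w ∈ ℂ ∖ (I_p ∪ ℝ); this equals (conj(w)√(D_p(w)) − w√(D_p(conj(w))))/(w − conj(w)). Then f is continuous on ℂ ∖ (I_p ∪ ℝ), and the function obtained by additionally setting f(t) = (−(1−2a)𝒜t − 1)/√(D_p(t)) for t ∈ ℝ is continuous on ℂ ∖ I_p. For w₀ ∈ I_p, the limit of f(w) as w → w₀ from the right equals −(1−2a)√(−D_p(w₀))/(𝒜·|Im(w₀)|) and the limit from the left equals +(1−2a)√(−D_p(w₀))/(𝒜·|Im(w₀)|); in particular these two one-sided limits agree if and only if a = 1/2. When a = 1/2, the function extended by f ≡ 0 on I_p (and by the above formula on ℝ) is continuous on all of ℂ. -/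
/-!
Write `s = √(D w)`, `c = 1 - 2a` and `r = 4a(1 - a)`. Off the real axis
`f w = Re w · (Im s / Im w) - Re s`, where `Re s = √((‖D w‖ + Re D w) / 2)` and
`|Im s| = √((‖D w‖ - Re D w) / 2)` depend continuously on `w` everywhere; only the sign of
`Im s`, which is that of `Im D w`, jumps across the slit `I_p = D⁻¹(-∞, 0)`.

On the slit `𝒜 Re w₀ + c = 0`, so `Im D w = 2𝒜² Im w (Re w - Re w₀)`: to the right of the slit
`Im s / Im w = |Im s| / |Im w|`, to the left it is the negative of that, and `Re s → 0`; this
gives the one-sided limits `± Re w₀ √(-D w₀) / |Im w₀|`. Near the real axis `Re D > 0`, and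
`2 Re s · Im s = Im D` turns `f` into `Re w · 𝒜 (𝒜 Re w + c) / Re s - Re s`, which is
continuous and equals the given formula on `ℝ` because `c² + r = 1`. For `a = 1/2` the slit lies
on `Re w = 0`, where the bound `|f w| ≤ |Re w| |Im s| / |Im w| + Re s` tends to `0`.
-/

open Set Filter Topology Complex ComplexConjugate

namespace Complex

variable {w z : ℂ}

lemma two_mul_re_mul_im_cpow_half (z : ℂ) :
    2 * (z ^ (1 / 2 : ℂ)).re * (z ^ (1 / 2 : ℂ)).im = z.im := by
  conv_rhs => rw [← cpow_ofNat_inv_pow z 2]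
  simp only [one_div, pow_two, mul_im]
  ring

lemma re_cpow_half_nonneg (z : ℂ) : 0 ≤ (z ^ (1 / 2 : ℂ)).re := by
  rw [one_div, cpow_inv_two_re]
  positivity

lemma re_cpow_half_pos (hz : 0 < z.re) : 0 < (z ^ (1 / 2 : ℂ)).re := by
  rw [one_div, cpow_inv_two_re]
  positivity

lemma continuous_re_cpow_half : Continuous fun z : ℂ => (z ^ (1 / 2 : ℂ)).re := by
  simp only [one_div, cpow_inv_two_re]
  fun_prop

lemma continuous_abs_im_cpow_half : Continuous fun z : ℂ => |(z ^ (1 / 2 : ℂ)).im| := by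
  simp only [one_div, abs_cpow_inv_two_im]
  fun_prop

lemma re_cpow_half_of_nonpos (hre : z.re ≤ 0) (him : z.im = 0) : (z ^ (1 / 2 : ℂ)).re = 0 := by
  rw [one_div, cpow_inv_two_re, ← abs_re_eq_norm.2 him, abs_of_nonpos hre]
  simp

lemma abs_im_cpow_half_of_nonpos (hre : z.re ≤ 0) (him : z.im = 0) :
    |(z ^ (1 / 2 : ℂ)).im| = √(-z.re) := by
  rw [one_div, abs_cpow_inv_two_im, ← abs_re_eq_norm.2 him, abs_of_nonpos hre]
  ring_nf

lemma im_cpow_half_mul_im_pos (hz : z.im ≠ 0) : 0 < (z ^ (1 / 2 : ℂ)).im * z.im := by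
  rw [← two_mul_re_mul_im_cpow_half z] at hz ⊢
  obtain ⟨h2re, him⟩ := mul_ne_zero_iff.1 hz
  have hre := (re_cpow_half_nonneg z).lt_of_ne (right_ne_zero_of_mul h2re).symm
  have him2 : 0 < (z ^ (1 / 2 : ℂ)).im ^ 2 := by positivity
  nlinarith [mul_pos hre him2]

lemma im_conj_mul_div_im (z : ℂ) (hw : w.im ≠ 0) :
    (conj w * z).im / w.im = w.re * (z.im / w.im) - z.re := by
  simp only [mul_im, conj_re, conj_im]
  field_simp
  ring

lemma abs_im_conj_mul_div_im_le (w z : ℂ) :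
    |(conj w * z).im / w.im| ≤ |w.re| * |z.im| / |w.im| + |z.re| := by
  rcases eq_or_ne w.im 0 with hw | hw
  · rw [hw, div_zero, abs_zero]
    positivity
  rw [im_conj_mul_div_im z hw, mul_div_assoc, ← abs_div, ← abs_mul]
  exact abs_sub _ _

lemma im_conj_mul_cpow_half_div_im_of_pos (h : 0 < z.im * w.im) :
    (conj w * z ^ (1 / 2 : ℂ)).im / w.im
      = w.re * |(z ^ (1 / 2 : ℂ)).im| / |w.im| - (z ^ (1 / 2 : ℂ)).re := by
  have hs := im_cpow_half_mul_im_pos (left_ne_zero_of_mul h.ne')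
  have : 0 < (z ^ (1 / 2 : ℂ)).im * w.im := by nlinarith [mul_pos hs h, sq_nonneg z.im]
  rw [im_conj_mul_div_im _ (right_ne_zero_of_mul this.ne'), mul_div_assoc, ← abs_div,
    abs_of_pos (div_pos_iff.2 (mul_pos_iff.1 this))]

lemma im_conj_mul_cpow_half_div_im_of_neg (h : z.im * w.im < 0) :
    (conj w * z ^ (1 / 2 : ℂ)).im / w.im
      = -w.re * |(z ^ (1 / 2 : ℂ)).im| / |w.im| - (z ^ (1 / 2 : ℂ)).re := by
  have hs := im_cpow_half_mul_im_pos (left_ne_zero_of_mul h.ne)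
  have : (z ^ (1 / 2 : ℂ)).im * w.im < 0 := by
    nlinarith [mul_neg_of_pos_of_neg hs h, sq_nonneg z.im]
  rw [im_conj_mul_div_im _ (right_ne_zero_of_mul this.ne), neg_mul, neg_div, mul_div_assoc,
    ← abs_div, abs_of_neg (div_neg_iff.2 (mul_neg_iff.1 this)), mul_neg, neg_neg]

lemma ofReal_im_conj_mul_div_im (w z : ℂ) :
    (((conj w * z).im / w.im : ℝ) : ℂ) = (conj w * z - w * conj z) / (w - conj w) := by
  have : w * conj z = conj (conj w * z) := by simp
  rw [this, sub_conj, sub_conj, mul_div_mul_right _ _ I_ne_zero]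
  push_cast
  rw [mul_div_mul_left _ _ two_ne_zero]

end Complex

/-- The paper's `D_p`, with `A = 𝒜`, `c = 1 - 2a` and `r = 4a(1 - a)`. -/
def quadD (A c r : ℝ) (w : ℂ) : ℂ := ((A : ℂ) * w + (c : ℂ)) ^ 2 + (r : ℂ)

def quadSlit (A c r : ℝ) : Set ℂ := {w | (quadD A c r w).re < 0 ∧ (quadD A c r w).im = 0}

/-- The paper's `f` off the real axis; on `ℝ` this is the junk value `0`. -/
noncomputable def imRatio (A c r : ℝ) (w : ℂ) : ℝ :=
  (conj w * quadD A c r w ^ (1 / 2 : ℂ)).im / w.im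

section

variable {A c r : ℝ} {w w₀ : ℂ}

lemma quadD_re : (quadD A c r w).re = (A * w.re + c) ^ 2 - A ^ 2 * w.im ^ 2 + r := by
  simp [quadD, pow_two]
  ring

lemma quadD_im : (quadD A c r w).im = 2 * A * w.im * (A * w.re + c) := by
  simp [quadD, pow_two]
  ring

lemma continuous_quadD : Continuous (quadD A c r) := by
  unfold quadD
  fun_prop

lemma quadD_conj : quadD A c r (conj w) = conj (quadD A c r w) := by
  simp [quadD]

lemma quadD_ofReal (t : ℝ) : quadD A c r t = ((A * t + c) ^ 2 + r : ℝ) := by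
  push_cast [quadD]
  rfl

lemma im_ne_zero_and_eq_zero_of_quadD_nonpos (hr : 0 < r) (hre : (quadD A c r w).re ≤ 0)
    (him : (quadD A c r w).im = 0) : w.im ≠ 0 ∧ A * w.re + c = 0 := by
  rw [quadD_re] at hre
  have hw : w.im ≠ 0 := by
    rintro h
    rw [h] at hre
    nlinarith [sq_nonneg (A * w.re + c)]
  refine ⟨hw, ?_⟩
  rw [quadD_im] at him
  rcases mul_eq_zero.1 him with h | h
  · have hA : A = 0 := by simpa [hw] using h
    rw [hA] at hre
    nlinarith [sq_nonneg c]
  · exact h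

lemma mem_quadSlit_iff (hA : A ≠ 0) (hr : 0 < r) :
    w ∈ quadSlit A c r ↔ w.re = -c / A ∧ √r / |A| < |w.im| := by
  have hlin : w.re = -c / A ↔ A * w.re + c = 0 := by
    rw [eq_div_iff hA]
    constructor <;> intro h <;> linarith
  have hbound : √r / |A| < |w.im| ↔ r < A ^ 2 * w.im ^ 2 := by
    rw [div_lt_iff₀ (abs_pos.2 hA), Real.sqrt_lt hr.le (by positivity), mul_pow, sq_abs, sq_abs,
      mul_comm]
  rw [hlin, hbound, quadSlit, mem_ofPred_eq]
  constructor
  · rintro ⟨hre, him⟩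
    obtain ⟨-, hx⟩ := im_ne_zero_and_eq_zero_of_quadD_nonpos hr hre.le him
    rw [quadD_re, hx] at hre
    exact ⟨hx, by linarith⟩
  · rintro ⟨hx, hy⟩
    rw [quadD_re, quadD_im, hx]
    constructor <;> nlinarith

lemma ofReal_imRatio (hw : w ∉ quadSlit A c r) :
    (imRatio A c r w : ℂ) = (conj w * quadD A c r w ^ (1 / 2 : ℂ)
      - w * quadD A c r (conj w) ^ (1 / 2 : ℂ)) / (w - conj w) := by
  have harg : (quadD A c r w).arg ≠ Real.pi := fun h => hw (arg_eq_pi_iff.1 h)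
  rw [quadD_conj, conj_cpow _ _ harg, map_div₀, map_one, map_ofNat, imRatio,
    ofReal_im_conj_mul_div_im]

lemma continuousAt_imRatio (hw : w.im ≠ 0) (hw' : w ∉ quadSlit A c r) :
    ContinuousAt (imRatio A c r) w := by
  have hD : 0 ≤ (quadD A c r w).re ∨ (quadD A c r w).im ≠ 0 := by
    by_contra! h
    exact hw' h
  have hsqrt : ContinuousAt (fun u => quadD A c r u ^ (1 / 2 : ℂ)) w :=
    (continuousAt_cpow_const_of_re_pos hD (by norm_num)).comp continuous_quadD.continuousAt
  exact (continuous_im.continuousAt.comp (continuous_conj.continuousAt.mul hsqrt)).div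
    continuous_im.continuousAt hw

lemma imRatio_eq_of_re_cpow_half_ne_zero (hw : w.im ≠ 0)
    (hs : (quadD A c r w ^ (1 / 2 : ℂ)).re ≠ 0) :
    imRatio A c r w = w.re * A * (A * w.re + c) / (quadD A c r w ^ (1 / 2 : ℂ)).re
      - (quadD A c r w ^ (1 / 2 : ℂ)).re := by
  have h := two_mul_re_mul_im_cpow_half (quadD A c r w)
  rw [quadD_im] at h
  rw [imRatio, im_conj_mul_div_im _ hw]
  field_simp
  linear_combination w.re / 2 * h

lemma re_cpow_half_quadD_ofReal (hr : 0 ≤ r) (t : ℝ) :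
    (quadD A c r t ^ (1 / 2 : ℂ)).re = √((A * t + c) ^ 2 + r) := by
  rw [quadD_ofReal, one_div, cpow_inv_two_re, norm_real, Real.norm_of_nonneg (by positivity),
    ofReal_re, add_self_div_two]

theorem continuousOn_compl_quadSlit (hr : 0 < r) {F : ℂ → ℝ}
    (hF : ∀ w : ℂ, w.im ≠ 0 → F w = imRatio A c r w)
    (hFR : ∀ t : ℝ, F t = (-c * A * t - (c ^ 2 + r)) / √((A * t + c) ^ 2 + r)) :
    ContinuousOn F (quadSlit A c r)ᶜ := by
  intro w hw
  refine ContinuousAt.continuousWithinAt ?_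
  by_cases him : w.im = 0
  · set s := fun u => (quadD A c r u ^ (1 / 2 : ℂ)).re
    have hwU : 0 < (quadD A c r w).re := by
      rw [quadD_re, him]
      nlinarith [sq_nonneg (A * w.re + c)]
    have hU : IsOpen {u | 0 < (quadD A c r u).re} :=
      isOpen_lt continuous_const (continuous_re.comp continuous_quadD)
    have hev : F =ᶠ[𝓝 w] fun u => u.re * A * (A * u.re + c) / s u - s u := by
      filter_upwards [hU.mem_nhds hwU] with u hu
      by_cases hu' : u.im = 0
      · obtain ⟨t, rfl⟩ : ∃ t : ℝ, u = t := ⟨u.re, ext rfl (by simp [hu'])⟩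
        have hS : 0 < √((A * t + c) ^ 2 + r) := by positivity
        simp only [s, hFR, re_cpow_half_quadD_ofReal hr.le, ofReal_re]
        field_simp
        rw [Real.sq_sqrt (by positivity)]
        ring
      · rw [hF u hu', imRatio_eq_of_re_cpow_half_ne_zero hu' (re_cpow_half_pos hu).ne']
    have hs : Continuous s := continuous_re_cpow_half.comp continuous_quadD
    rw [continuousAt_congr hev]
    fun_prop (disch := exact (re_cpow_half_pos hwU).ne')
  · have hev : F =ᶠ[𝓝 w] imRatio A c r :=
      Filter.mem_of_superset ((isOpen_ne_fun continuous_im continuous_const).mem_nhds him) hF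
    exact (continuousAt_congr hev).2 (continuousAt_imRatio him hw)

lemma quadD_im_mul_im (hx₀ : A * w₀.re + c = 0) :
    (quadD A c r w).im * w.im = 2 * A ^ 2 * w.im ^ 2 * (w.re - w₀.re) := by
  rw [quadD_im]
  linear_combination 2 * A * w.im ^ 2 * hx₀

lemma tendsto_re_mul_abs_im_div_sub_re (hr : 0 < r) (hw₀ : w₀ ∈ quadSlit A c r) (σ : ℝ) :
    Tendsto (fun w => σ * w.re * |(quadD A c r w ^ (1 / 2 : ℂ)).im| / |w.im|
        - (quadD A c r w ^ (1 / 2 : ℂ)).re) (𝓝 w₀)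
      (𝓝 (σ * w₀.re * √(-(quadD A c r w₀).re) / |w₀.im|)) := by
  have hy₀ := (im_ne_zero_and_eq_zero_of_quadD_nonpos hr hw₀.1.le hw₀.2).1
  have hnum : Continuous fun w : ℂ => σ * w.re * |(quadD A c r w ^ (1 / 2 : ℂ)).im| :=
    (continuous_const.mul continuous_re).mul (continuous_abs_im_cpow_half.comp continuous_quadD)
  have hre : Continuous fun w => (quadD A c r w ^ (1 / 2 : ℂ)).re :=
    continuous_re_cpow_half.comp continuous_quadD
  have hcont : ContinuousAt (fun w => σ * w.re * |(quadD A c r w ^ (1 / 2 : ℂ)).im| / |w.im|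
      - (quadD A c r w ^ (1 / 2 : ℂ)).re) w₀ :=
    (hnum.continuousAt.div continuous_im.abs.continuousAt (abs_ne_zero.2 hy₀)).sub
      hre.continuousAt
  convert hcont.tendsto using 2
  simp only [re_cpow_half_of_nonpos hw₀.1.le hw₀.2,
    abs_im_cpow_half_of_nonpos hw₀.1.le hw₀.2, sub_zero]

theorem tendsto_imRatio_right (hA : A ≠ 0) (hr : 0 < r) (hw₀ : w₀ ∈ quadSlit A c r) :
    Tendsto (imRatio A c r) (𝓝[{w | w₀.re < w.re} ∩ {w | w.im = 0}ᶜ] w₀)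
      (𝓝 (-c * √(-(quadD A c r w₀).re) / (A * |w₀.im|))) := by
  have hx₀ := (im_ne_zero_and_eq_zero_of_quadD_nonpos hr hw₀.1.le hw₀.2).2
  have hlim := tendsto_re_mul_abs_im_div_sub_re hr hw₀ 1
  rw [show w₀.re = -c / A by rw [eq_div_iff hA]; linarith] at hlim
  simp only [one_mul] at hlim
  refine ((hlim.mono_left nhdsWithin_le_nhds).congr' ?_).trans_eq ?_
  · filter_upwards [self_mem_nhdsWithin] with w ⟨hre, hw⟩
    refine (im_conj_mul_cpow_half_div_im_of_pos ?_).symm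
    rw [quadD_im_mul_im hx₀]
    have hw : w.im ≠ 0 := hw
    exact mul_pos (by positivity) (sub_pos.2 hre)
  · field_simp

theorem tendsto_imRatio_left (hA : A ≠ 0) (hr : 0 < r) (hw₀ : w₀ ∈ quadSlit A c r) :
    Tendsto (imRatio A c r) (𝓝[{w | w.re < w₀.re} ∩ {w | w.im = 0}ᶜ] w₀)
      (𝓝 (c * √(-(quadD A c r w₀).re) / (A * |w₀.im|))) := by
  have hx₀ := (im_ne_zero_and_eq_zero_of_quadD_nonpos hr hw₀.1.le hw₀.2).2
  have hlim := tendsto_re_mul_abs_im_div_sub_re hr hw₀ (-1)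
  rw [show w₀.re = -c / A by rw [eq_div_iff hA]; linarith] at hlim
  simp only [neg_one_mul] at hlim
  refine ((hlim.mono_left nhdsWithin_le_nhds).congr' ?_).trans_eq ?_
  · filter_upwards [self_mem_nhdsWithin] with w ⟨hre, hw⟩
    refine (im_conj_mul_cpow_half_div_im_of_neg ?_).symm
    rw [quadD_im_mul_im hx₀]
    have hw : w.im ≠ 0 := hw
    exact mul_neg_of_pos_of_neg (by positivity) (sub_neg.2 hre)
  · field_simp

theorem continuous_of_eq_zero_on_quadSlit (hA : A ≠ 0) (hr : 0 < r) {F G : ℂ → ℝ}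
    (hF : ∀ w : ℂ, w.im ≠ 0 → F w = imRatio A 0 r w)
    (hFc : ContinuousOn F (quadSlit A 0 r)ᶜ) (hGF : ∀ w ∉ quadSlit A 0 r, G w = F w)
    (hG0 : ∀ w ∈ quadSlit A 0 r, G w = 0) :
    Continuous G := by
  rw [continuous_iff_continuousAt]
  intro w₀
  by_cases hw₀ : quadD A 0 r w₀ ∈ slitPlane
  · have hU : quadD A 0 r ⁻¹' slitPlane ∈ 𝓝 w₀ :=
      (isOpen_slitPlane.preimage continuous_quadD).mem_nhds hw₀
    have hUS : quadD A 0 r ⁻¹' slitPlane ⊆ (quadSlit A 0 r)ᶜ := fun w hw hwS => by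
      rcases mem_slitPlane_iff.1 hw with h | h
      exacts [hwS.1.not_gt h, h hwS.2]
    have hev : G =ᶠ[𝓝 w₀] F := Filter.mem_of_superset hU fun w hw => hGF w (hUS hw)
    exact (continuousAt_congr hev).2 (hFc.continuousAt (Filter.mem_of_superset hU hUS))
  simp only [mem_slitPlane_iff, not_or, not_lt, not_not] at hw₀
  obtain ⟨hy₀, hx₀⟩ := im_ne_zero_and_eq_zero_of_quadD_nonpos hr hw₀.1 hw₀.2
  have hx₀ : w₀.re = 0 := by simpa [hA] using hx₀
  set M : ℂ → ℝ := fun w => |w.re| * |(quadD A 0 r w ^ (1 / 2 : ℂ)).im| / |w.im|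
    + |(quadD A 0 r w ^ (1 / 2 : ℂ)).re|
  have hM₀ : M w₀ = 0 := by
    simp only [M, hx₀, re_cpow_half_of_nonpos hw₀.1 hw₀.2, abs_zero, zero_mul, zero_div,
      add_zero]
  have hM : Tendsto M (𝓝 w₀) (𝓝 0) := by
    have hnum : Continuous fun w : ℂ => |w.re| * |(quadD A 0 r w ^ (1 / 2 : ℂ)).im| :=
      continuous_re.abs.mul (continuous_abs_im_cpow_half.comp continuous_quadD)
    have hre : Continuous fun w => |(quadD A 0 r w ^ (1 / 2 : ℂ)).re| :=
      (continuous_re_cpow_half.comp continuous_quadD).abs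
    have hcont : ContinuousAt M w₀ :=
      (hnum.continuousAt.div continuous_im.abs.continuousAt (abs_ne_zero.2 hy₀)).add
        hre.continuousAt
    exact hM₀ ▸ hcont.tendsto
  have hGM : ∀ᶠ w in 𝓝 w₀, ‖G w‖ ≤ M w := by
    filter_upwards [(isOpen_ne_fun continuous_im continuous_const).mem_nhds hy₀] with w hw
    by_cases hwS : w ∈ quadSlit A 0 r
    · rw [hG0 w hwS, norm_zero]
      positivity
    · rw [hGF w hwS, hF w hw, Real.norm_eq_abs]
      exact abs_im_conj_mul_div_im_le _ _
  have hG₀ : G w₀ = 0 := norm_le_zero_iff.1 (hGM.self_of_nhds.trans_eq hM₀)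
  rw [ContinuousAt, hG₀]
  exact squeeze_zero_norm' hGM hM

end

theorem stmt4 (a α α' : ℝ) (ha : a ∈ Ioo (0 : ℝ) 1) (hαα : α ≠ α')
    (𝒜 : ℝ) (h𝒜 : 𝒜 = α' - α)
    (Dp : ℂ → ℂ)
    (hDp : ∀ w : ℂ, Dp w = ((𝒜 : ℂ) * w + ((1 - 2 * a : ℝ) : ℂ)) ^ 2 + ((4 * a * (1 - a) : ℝ) : ℂ))
    (Ip : Set ℂ)
    (hIp : Ip = {w : ℂ | w.re = -(1 - 2 * a) / 𝒜 ∧ 2 * Real.sqrt (a * (1 - a)) / |𝒜| < |w.im|})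
    (F : ℂ → ℝ)
    -- F(w) = Im(conj(w)·√(D_p(w)))/Im(w) off the real axis
    (hF : ∀ w : ℂ, w.im ≠ 0 → F w = ((starRingEnd ℂ) w * (Dp w) ^ ((1 : ℂ) / 2)).im / w.im)
    -- the continuous extension to ℝ
    (hFR : ∀ t : ℝ, F (t : ℂ) =
      (-(1 - 2 * a) * 𝒜 * t - 1) / Real.sqrt ((𝒜 * t + (1 - 2 * a)) ^ 2 + 4 * a * (1 - a))) :
    -- the quotient identity
    (∀ w : ℂ, w.im ≠ 0 → w ∉ Ip →
      ((F w : ℝ) : ℂ) =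
        ((starRingEnd ℂ) w * (Dp w) ^ ((1 : ℂ) / 2) - w * (Dp ((starRingEnd ℂ) w)) ^ ((1 : ℂ) / 2)) /
          (w - (starRingEnd ℂ) w))
    -- continuity off I_p ∪ ℝ
    ∧ ContinuousOn F (Ip ∪ {w : ℂ | w.im = 0})ᶜ
    -- the extension is continuous off I_p
    ∧ ContinuousOn F Ipᶜ
    -- one-sided limits at I_p
    ∧ (∀ w₀ ∈ Ip,
        Tendsto F (nhdsWithin w₀ ({w : ℂ | w₀.re < w.re} ∩ (Ip ∪ {w : ℂ | w.im = 0})ᶜ))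
          (nhds (-(1 - 2 * a) * Real.sqrt (-(Dp w₀).re) / (𝒜 * |w₀.im|)))
        ∧ Tendsto F (nhdsWithin w₀ ({w : ℂ | w.re < w₀.re} ∩ (Ip ∪ {w : ℂ | w.im = 0})ᶜ))
          (nhds ((1 - 2 * a) * Real.sqrt (-(Dp w₀).re) / (𝒜 * |w₀.im|))))
    -- the one-sided limits agree iff a = 1/2
    ∧ (∀ w₀ ∈ Ip,
        (-(1 - 2 * a) * Real.sqrt (-(Dp w₀).re) / (𝒜 * |w₀.im|)
          = (1 - 2 * a) * Real.sqrt (-(Dp w₀).re) / (𝒜 * |w₀.im|)) ↔ a = 1 / 2)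
    -- if a = 1/2, the extension by 0 on I_p is continuous on all of ℂ
    ∧ (a = 1 / 2 → ∀ G : ℂ → ℝ, (∀ w ∉ Ip, G w = F w) → (∀ w ∈ Ip, G w = 0) →
        Continuous G) := by
  obtain ⟨ha0, ha1⟩ := ha
  have hA : 𝒜 ≠ 0 := h𝒜 ▸ sub_ne_zero.2 hαα.symm
  have hr : 0 < 4 * a * (1 - a) := by nlinarith
  obtain rfl : Dp = quadD 𝒜 (1 - 2 * a) (4 * a * (1 - a)) := funext hDp
  obtain rfl : Ip = quadSlit 𝒜 (1 - 2 * a) (4 * a * (1 - a)) := by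
    ext w
    rw [hIp, mem_quadSlit_iff hA hr, mul_assoc, Real.sqrt_mul' 4 (by nlinarith),
      show √4 = 2 by rw [show (4 : ℝ) = 2 ^ 2 by norm_num, Real.sqrt_sq zero_le_two]]
    rfl
  replace hF : ∀ w : ℂ, w.im ≠ 0 → F w = imRatio 𝒜 (1 - 2 * a) (4 * a * (1 - a)) w := hF
  have hFc := continuousOn_compl_quadSlit hr hF fun t => by rw [hFR]; ring_nf
  have hFS : ∀ {t : Set ℂ} {w₀ : ℂ}, t ⊆ {w : ℂ | w.im = 0}ᶜ →
      imRatio 𝒜 (1 - 2 * a) (4 * a * (1 - a)) =ᶠ[𝓝[t] w₀] F := fun ht =>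
    eventually_nhdsWithin_of_forall fun w hw => (hF w (ht hw)).symm
  have hsub : ∀ t : Set ℂ, t ∩ (quadSlit 𝒜 (1 - 2 * a) (4 * a * (1 - a)) ∪ {w : ℂ | w.im = 0})ᶜ
      ⊆ t ∩ {w : ℂ | w.im = 0}ᶜ := fun t =>
    inter_subset_inter_right t (compl_subset_compl.2 subset_union_right)
  refine ⟨fun w hw hwS => hF w hw ▸ ofReal_imRatio hwS,
    hFc.mono (compl_subset_compl.2 subset_union_left), hFc, fun w₀ hw₀ => ⟨?_, ?_⟩,
    fun w₀ hw₀ => ?_, fun ha2 G hGF hG0 => ?_⟩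
  · exact ((tendsto_imRatio_right hA hr hw₀).congr' (hFS inter_subset_right)).mono_left
      (nhdsWithin_mono _ (hsub _))
  · exact ((tendsto_imRatio_left hA hr hw₀).congr' (hFS inter_subset_right)).mono_left
      (nhdsWithin_mono _ (hsub _))
  · have hy₀ := (im_ne_zero_and_eq_zero_of_quadD_nonpos hr hw₀.1.le hw₀.2).1
    have hs : 0 < √(-(quadD 𝒜 (1 - 2 * a) (4 * a * (1 - a)) w₀).re) :=
      Real.sqrt_pos.2 (neg_pos.2 hw₀.1)
    rw [div_left_inj' (mul_ne_zero hA (abs_ne_zero.2 hy₀)), neg_mul, neg_eq_self,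
      mul_eq_zero, or_iff_left hs.ne']
    constructor <;> intro h <;> linarith
  · rw [show 1 - 2 * a = 0 by linarith] at hF hFc hGF hG0
    exact continuous_of_eq_zero_on_quadSlit hA hr hF hFc hGF hG0
end

section
/- Let Ω = {w ∈ ℂ : w ≠ 0, w ∉ I_p, i·w ∉ I_q} and define B_X(w) = (α+α')/2 + i(β+β')/2 + (√(D_p(w)) + √(D_q(i·w)))/(2w) for w ∈ Ω. Then: (1) B_X is continuous on Ω and analytic on {w ∈ ℂ : w ≠ 0, w ∉ cl(I_p), i·w ∉ cl(I_q)}; (2) for every w₀ ∈ ℂ with w₀ ∈ I_p and i·w₀ ∈ I_q, the limit of B_X(w) as w → w₀ within Ω does not exist (there is no L ∈ ℂ such that B_X(w) → L as w → w₀ within Ω); (3) w·B_X(w) → 1 as w → 0 within Ω. -/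
/-!
`D_p` and `D_q` are quadratics `(A z + c)² + d` with `d > 0`, which take values in `(-∞, 0)`
exactly on the two rays `A re z + c = 0`, `(A im z)² > d`; these are `I_p` and `I_q`. Off these
rays the principal square root of the quadratic is continuous, off their closures holomorphic,
and at `0` both quadratics equal `(1 - 2a)² + 4a(1 - a) = 1`; this gives (1) and (3).
At a point `w₀` with `w₀ ∈ I_p`, `i w₀ ∈ I_q`, the paths `w₀ + ε (1 ± (re w₀) i)`, `ε → 0⁺`,
keep `D_p` on the same side of the negative axis but send `D_q(i ·)` to opposite sides, so the
limits of `B_X` along them differ by `i √(ℬ² (re w₀)² - 4b(1 - b)) / w₀ ≠ 0`.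
-/

open Set Filter Topology Complex

theorem tendsto_cpow_const_of_tendsto_log {l : Filter ℂ} {L : ℂ} (hlog : Tendsto log l (𝓝 L))
    (hne : ∀ᶠ z in l, z ≠ 0) (w : ℂ) : Tendsto (· ^ w) l (𝓝 (exp (L * w))) :=
  ((continuous_exp.tendsto _).comp (hlog.mul_const w)).congr'
    (hne.mono fun _ hz => (cpow_def_of_ne_zero hz w).symm)

theorem exp_log_mul_half {y : ℝ} (hy : 0 < y) : exp (Real.log y * (1 / 2 : ℂ)) = √y := by
  rw [ofReal_log hy.le, ← cpow_def_of_ne_zero (by exact_mod_cast hy.ne'),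
    ← ofReal_one, ← ofReal_ofNat, ← ofReal_div, ← ofReal_cpow hy.le, Real.sqrt_eq_rpow]

theorem tendsto_cpow_half_nhdsWithin_im_nonneg {x : ℝ} (hx : x < 0) :
    Tendsto (· ^ (1 / 2 : ℂ)) (𝓝[{z : ℂ | 0 ≤ z.im}] (x : ℂ)) (𝓝 (I * √(-x))) := by
  have hlog := tendsto_log_nhdsWithin_im_nonneg_of_re_neg_of_im_zero
    (z := x) (by simpa using hx) (ofReal_im x)
  rw [norm_real, Real.norm_of_nonpos hx.le] at hlog
  have hne : ∀ᶠ z in 𝓝[{z : ℂ | 0 ≤ z.im}] (x : ℂ), z ≠ 0 :=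
    eventually_nhdsWithin_of_eventually_nhds (eventually_ne_nhds (by exact_mod_cast hx.ne))
  convert tendsto_cpow_const_of_tendsto_log hlog hne (1 / 2) using 2
  rw [add_mul, exp_add, exp_log_mul_half (by linarith),
    show (Real.pi : ℂ) * I * (1 / 2) = Real.pi / 2 * I by ring, exp_pi_div_two_mul_I, mul_comm]

theorem tendsto_cpow_half_nhdsWithin_im_neg {x : ℝ} (hx : x < 0) :
    Tendsto (· ^ (1 / 2 : ℂ)) (𝓝[{z : ℂ | z.im < 0}] (x : ℂ)) (𝓝 (-I * √(-x))) := by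
  have hlog := tendsto_log_nhdsWithin_im_neg_of_re_neg_of_im_zero
    (z := x) (by simpa using hx) (ofReal_im x)
  rw [norm_real, Real.norm_of_nonpos hx.le] at hlog
  have hne : ∀ᶠ z in 𝓝[{z : ℂ | z.im < 0}] (x : ℂ), z ≠ 0 :=
    eventually_nhdsWithin_of_eventually_nhds (eventually_ne_nhds (by exact_mod_cast hx.ne))
  convert tendsto_cpow_const_of_tendsto_log hlog hne (1 / 2) using 2
  rw [sub_mul, sub_eq_add_neg, exp_add, exp_log_mul_half (by linarith),
    show -((Real.pi : ℂ) * I * (1 / 2)) = -Real.pi / 2 * I by ring,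
    exp_neg_pi_div_two_mul_I, mul_comm]

noncomputable def quad (A c d : ℝ) (z : ℂ) : ℂ := ((A : ℂ) * z + c) ^ 2 + d

-- the branch cut of `√(quad A c d)`: for `d > 0` exactly the preimage of `(-∞, 0)`
def quadCut (A c d : ℝ) : Set ℂ := {z | A * z.re + c = 0 ∧ d < (A * z.im) ^ 2}

section Quad

variable {A c d : ℝ} {z : ℂ}

theorem quad_re (z : ℂ) : (quad A c d z).re = (A * z.re + c) ^ 2 - (A * z.im) ^ 2 + d := by
  simp [quad, sq]

theorem quad_im (z : ℂ) : (quad A c d z).im = 2 * (A * z.re + c) * (A * z.im) := by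
  simp [quad, sq]; ring

theorem quad_of_mul_re_add_eq_zero (h : A * z.re + c = 0) :
    quad A c d z = ((d - (A * z.im) ^ 2 : ℝ) : ℂ) := by
  apply Complex.ext <;> simp only [quad_re, quad_im, h, ofReal_re, ofReal_im] <;> ring

theorem differentiable_quad : Differentiable ℂ (quad A c d) := by
  unfold quad; fun_prop

theorem mul_re_add_eq_zero_of_quad_im_eq_zero (hd : 0 < d) (him : (quad A c d z).im = 0)
    (hre : (quad A c d z).re ≤ 0) : A * z.re + c = 0 := by
  rw [quad_im] at him
  rw [quad_re] at hre
  by_contra h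
  have : A * z.im = 0 := by simpa [h] using him
  nlinarith [sq_nonneg (A * z.re + c)]

theorem re_nonneg_or_im_ne_zero_quad (hd : 0 < d) (hz : z ∉ quadCut A c d) :
    0 ≤ (quad A c d z).re ∨ (quad A c d z).im ≠ 0 := by
  by_contra! h
  have hline := mul_re_add_eq_zero_of_quad_im_eq_zero hd h.2 h.1.le
  have hre := h.1
  rw [quad_re, hline] at hre
  exact hz ⟨hline, by linarith⟩

theorem setOf_subset_closure_quadCut (hd : 0 < d) :
    {z : ℂ | A * z.re + c = 0 ∧ d ≤ (A * z.im) ^ 2} ⊆ closure (quadCut A c d) := by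
  rintro z ⟨hline, hle⟩
  have hpath : Tendsto (fun t : ℝ => (z.re : ℂ) + t * z.im * I) (𝓝[>] 1) (𝓝 z) := by
    have : Continuous (fun t : ℝ => (z.re : ℂ) + t * z.im * I) := by fun_prop
    simpa [re_add_im] using (this.tendsto 1).mono_left nhdsWithin_le_nhds
  refine mem_closure_of_tendsto hpath ?_
  filter_upwards [self_mem_nhdsWithin] with t (ht : 1 < t)
  refine ⟨by simpa using hline, ?_⟩
  have : 0 < (A * z.im) ^ 2 := hd.trans_le hle
  have him : ((z.re : ℂ) + t * z.im * I).im = t * z.im := by simp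
  rw [him, mul_left_comm, mul_pow]
  nlinarith [one_lt_pow₀ ht two_ne_zero]

theorem quad_mem_slitPlane (hd : 0 < d) (hz : z ∉ closure (quadCut A c d)) :
    quad A c d z ∈ slitPlane := by
  rw [mem_slitPlane_iff]
  by_contra! h
  have hline := mul_re_add_eq_zero_of_quad_im_eq_zero hd h.2 h.1
  have hre := h.1
  rw [quad_re, hline] at hre
  exact hz (setOf_subset_closure_quadCut hd ⟨hline, by linarith⟩)

theorem setOf_re_eq_and_lt_abs_im_eq_quadCut (hA : A ≠ 0) {r : ℝ} (hr : 0 ≤ r) :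
    {z : ℂ | z.re = -c / A ∧ r / |A| < |z.im|} = quadCut A c (r ^ 2) := by
  ext z
  refine and_congr ?_ ?_
  · rw [eq_div_iff hA]
    constructor <;> intro h <;> linarith
  · rw [div_lt_iff₀ (abs_pos.mpr hA), sq_lt_sq, abs_of_nonneg hr, abs_mul, mul_comm]

theorem im_ne_zero_of_mem_quadCut (hd : 0 ≤ d) (hz : z ∈ quadCut A c d) : z.im ≠ 0 := by
  intro h
  have := hz.2
  simp [h] at this
  linarith

theorem add_mul_notMem_quadCut (hA : A ≠ 0) {z₀ v : ℂ} (hz₀ : A * z₀.re + c = 0)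
    (hv : v.re ≠ 0) {ε : ℝ} (hε : ε ≠ 0) : z₀ + ε * v ∉ quadCut A c d := by
  rintro ⟨h, -⟩
  simp only [add_re, re_ofReal_mul] at h
  have : A * (ε * v.re) = 0 := by linarith
  simp_all

theorem quad_im_add_mul {z₀ : ℂ} (h : A * z₀.re + c = 0) (v : ℂ) (ε : ℝ) :
    (quad A c d (z₀ + ε * v)).im = ε * (2 * A ^ 2 * (v.re * (z₀.im + ε * v.im))) := by
  rw [quad_im]
  simp only [add_re, add_im, re_ofReal_mul, im_ofReal_mul]
  linear_combination (2 * A * (z₀.im + ε * v.im)) * h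

theorem tendsto_quad_cpow_half_along (hd : 0 < d) {z₀ v : ℂ} (hz₀ : z₀ ∈ quadCut A c d)
    (hv : v.re * z₀.im ≠ 0) :
    Tendsto (fun ε : ℝ => quad A c d (z₀ + ε * v) ^ (1 / 2 : ℂ)) (𝓝[>] 0)
      (𝓝 (Real.sign (v.re * z₀.im) * I * √((A * z₀.im) ^ 2 - d))) := by
  obtain ⟨hline, hlt⟩ := hz₀
  have hA : A ≠ 0 := by rintro rfl; simp at hlt; linarith
  have hx : d - (A * z₀.im) ^ 2 < 0 := by linarith
  have hpath : Tendsto (fun ε : ℝ => quad A c d (z₀ + ε * v)) (𝓝[>] 0)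
      (𝓝 ((d - (A * z₀.im) ^ 2 : ℝ) : ℂ)) := by
    rw [← quad_of_mul_re_add_eq_zero hline]
    have : Continuous fun ε : ℝ => quad A c d (z₀ + ε * v) :=
      differentiable_quad.continuous.comp (by fun_prop)
    simpa using (this.tendsto 0).mono_left nhdsWithin_le_nhds
  have hsign : ∀ᶠ ε : ℝ in 𝓝[>] 0, 0 < v.re * z₀.im * (quad A c d (z₀ + ε * v)).im := by
    have hg : Tendsto (fun ε : ℝ => v.re * z₀.im * (v.re * (z₀.im + ε * v.im))) (𝓝 0)
        (𝓝 ((v.re * z₀.im) ^ 2)) := by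
      convert ((by fun_prop : Continuous fun ε : ℝ =>
        v.re * z₀.im * (v.re * (z₀.im + ε * v.im))).tendsto 0) using 2
      ring
    filter_upwards [nhdsWithin_le_nhds (hg.eventually (eventually_gt_nhds (by positivity))),
      self_mem_nhdsWithin] with ε hε (hε0 : 0 < ε)
    rw [quad_im_add_mul hline]
    have hA2 : 0 < A ^ 2 := by positivity
    linarith [mul_pos (mul_pos hε0 (mul_pos two_pos hA2)) hε]
  rcases hv.lt_or_gt with hneg | hpos
  · have hT := (tendsto_cpow_half_nhdsWithin_im_neg hx).comp (tendsto_nhdsWithin_iff.mpr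
      ⟨hpath, hsign.mono fun _ h => neg_of_mul_pos_right h hneg.le⟩)
    rwa [Real.sign_of_neg hneg, ← neg_sub d, ofReal_neg, ofReal_one, neg_one_mul]
  · have hT := (tendsto_cpow_half_nhdsWithin_im_nonneg hx).comp (tendsto_nhdsWithin_iff.mpr
      ⟨hpath, hsign.mono fun _ h => (pos_of_mul_pos_right h hpos.le).le⟩)
    rwa [Real.sign_of_pos hpos, ← neg_sub d, ofReal_one, one_mul]

theorem continuousAt_quad_cpow (hd : 0 < d) (hz : z ∉ quadCut A c d) {w : ℂ} (hw : 0 < w.re) :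
    ContinuousAt (fun z => quad A c d z ^ w) z :=
  (continuousAt_cpow_const_of_re_pos (re_nonneg_or_im_ne_zero_quad hd hz) hw).comp
    differentiable_quad.continuous.continuousAt

theorem differentiableAt_quad_cpow (hd : 0 < d) (hz : z ∉ closure (quadCut A c d)) (w : ℂ) :
    DifferentiableAt ℂ (fun z => quad A c d z ^ w) z :=
  differentiable_quad.differentiableAt.cpow (differentiableAt_const w) (quad_mem_slitPlane hd hz)

theorem zero_notMem_quadCut (hd : 0 ≤ d) : (0 : ℂ) ∉ quadCut A c d := by
  rintro ⟨-, h⟩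
  simp at h
  linarith

end Quad

noncomputable def invGreen (A c d B c' d' : ℝ) (C w : ℂ) : ℂ :=
  C + (quad A c d w ^ (1 / 2 : ℂ) + quad B c' d' (I * w) ^ (1 / 2 : ℂ)) / (2 * w)

def invGreenDomain (A c d B c' d' : ℝ) : Set ℂ :=
  {w | w ≠ 0 ∧ w ∉ quadCut A c d ∧ I * w ∉ quadCut B c' d'}

section InvGreen

variable {A c d B c' d' : ℝ} {C : ℂ}

theorem continuousAt_add_cpow_half (hd : 0 < d) (hd' : 0 < d') {w : ℂ} (hp : w ∉ quadCut A c d)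
    (hq : I * w ∉ quadCut B c' d') :
    ContinuousAt (fun w => quad A c d w ^ (1 / 2 : ℂ) + quad B c' d' (I * w) ^ (1 / 2 : ℂ)) w :=
  (continuousAt_quad_cpow hd hp (by norm_num)).add
    ((continuousAt_quad_cpow hd' hq (by norm_num)).comp (continuous_const_mul I).continuousAt)

theorem continuousOn_invGreen (hd : 0 < d) (hd' : 0 < d') :
    ContinuousOn (invGreen A c d B c' d' C) (invGreenDomain A c d B c' d') := by
  rintro w ⟨hw, hp, hq⟩
  exact (continuousAt_const.add ((continuousAt_add_cpow_half hd hd' hp hq).div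
    (by fun_prop) (by simpa))).continuousWithinAt

theorem analyticOnNhd_invGreen (hd : 0 < d) (hd' : 0 < d') :
    AnalyticOnNhd ℂ (invGreen A c d B c' d' C)
      {w | w ≠ 0 ∧ w ∉ closure (quadCut A c d) ∧ I * w ∉ closure (quadCut B c' d')} := by
  have hopen : IsOpen
      {w | w ≠ 0 ∧ w ∉ closure (quadCut A c d) ∧ I * w ∉ closure (quadCut B c' d')} :=
    isOpen_compl_singleton.inter (isClosed_closure.isOpen_compl.inter
      (isClosed_closure.isOpen_compl.preimage (continuous_const_mul I)))
  refine DifferentiableOn.analyticOnNhd (fun w ⟨hw, hp, hq⟩ => ?_) hopen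
  refine ((differentiableAt_const C).add (((differentiableAt_quad_cpow hd hp _).add
    ?_).div (by fun_prop) (by simpa))).differentiableWithinAt
  exact (differentiableAt_quad_cpow hd' hq _).comp w (differentiableAt_id.const_mul I)

theorem tendsto_mul_invGreen_zero (hd : 0 < d) (hd' : 0 < d') :
    Tendsto (fun w => w * invGreen A c d B c' d' C w) (𝓝[≠] 0)
      (𝓝 ((quad A c d 0 ^ (1 / 2 : ℂ) + quad B c' d' 0 ^ (1 / 2 : ℂ)) / 2)) := by
  have hcont : ContinuousAt (fun w => w * C +
      (quad A c d w ^ (1 / 2 : ℂ) + quad B c' d' (I * w) ^ (1 / 2 : ℂ)) / 2) 0 :=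
    (continuousAt_id.mul continuousAt_const).add ((continuousAt_add_cpow_half hd hd'
      (zero_notMem_quadCut hd.le) (by simpa using zero_notMem_quadCut hd'.le)).div_const 2)
  have hlim := hcont.tendsto.mono_left (nhdsWithin_le_nhds (s := {0}ᶜ))
  rw [zero_mul, zero_add, mul_zero] at hlim
  refine hlim.congr' (eventually_nhdsWithin_of_forall fun w (hw : w ≠ 0) => ?_)
  simp only [invGreen]
  field_simp

theorem not_tendsto_invGreen (hA : A ≠ 0) (hB : B ≠ 0) (hd : 0 < d) (hd' : 0 < d') {w₀ : ℂ}
    (hp : w₀ ∈ quadCut A c d) (hq : I * w₀ ∈ quadCut B c' d') :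
    ¬ ∃ L, Tendsto (invGreen A c d B c' d' C) (𝓝[invGreenDomain A c d B c' d'] w₀) (𝓝 L) := by
  rintro ⟨L, hL⟩
  have hre : w₀.re ≠ 0 := by simpa using im_ne_zero_of_mem_quadCut hd'.le hq
  have hw₀ : w₀ ≠ 0 := fun h => hre (by simp [h])
  have him : w₀.im ≠ 0 := im_ne_zero_of_mem_quadCut hd.le hp
  set P : ℂ := Real.sign w₀.im * I * √((A * w₀.im) ^ 2 - d)
  set Q : ℝ := √((B * (I * w₀).im) ^ 2 - d')
  have hQ : 0 < Q := Real.sqrt_pos.mpr (by linarith [hq.2])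
  have key : ∀ t : ℝ, t ≠ 0 → L = C + (P + Real.sign (-t * w₀.re) * I * Q) / (2 * w₀) := by
    intro t ht
    set v : ℂ := 1 + t * I
    have hpath : Tendsto (fun ε : ℝ => w₀ + ε * v) (𝓝[>] 0) (𝓝 w₀) := by
      have : Continuous fun ε : ℝ => w₀ + ε * v := by fun_prop
      simpa using (this.tendsto 0).mono_left nhdsWithin_le_nhds
    have hpathΩ : Tendsto (fun ε : ℝ => w₀ + ε * v) (𝓝[>] 0)
        (𝓝[invGreenDomain A c d B c' d'] w₀) := by
      refine tendsto_nhdsWithin_iff.mpr ⟨hpath, ?_⟩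
      filter_upwards [hpath.eventually_ne hw₀, self_mem_nhdsWithin] with ε hε (hε0 : 0 < ε)
      refine ⟨hε, add_mul_notMem_quadCut hA hp.1 (by simp [v]) hε0.ne', ?_⟩
      rw [show I * (w₀ + ε * v) = I * w₀ + ε * (I * v) by ring]
      exact add_mul_notMem_quadCut hB hq.1 (by simpa [v] using ht) hε0.ne'
    have hPlim := tendsto_quad_cpow_half_along hd hp (v := v) (by simpa [v] using him)
    rw [show v.re * w₀.im = w₀.im by simp [v]] at hPlim
    have hsign : (I * v).re * (I * w₀).im = -t * w₀.re := by simp [v]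
    have hQlim := tendsto_quad_cpow_half_along hd' hq (v := I * v)
      (by rw [hsign]; exact mul_ne_zero (neg_ne_zero.mpr ht) hre)
    rw [hsign] at hQlim
    have hlim := (tendsto_const_nhds (x := C)).add ((hPlim.add hQlim).div (hpath.const_mul 2)
      (mul_ne_zero two_ne_zero hw₀))
    refine tendsto_nhds_unique (hL.comp hpathΩ) (hlim.congr fun ε => ?_)
    simp only [Function.comp_apply, Pi.div_apply, invGreen]
    rw [show I * (w₀ + ε * v) = I * w₀ + ε * (I * v) by ring]
  have hneg := key w₀.re hre
  have hpos := key (-w₀.re) (neg_ne_zero.mpr hre)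
  rw [Real.sign_of_neg (by nlinarith [mul_self_pos.mpr hre])] at hneg
  rw [Real.sign_of_pos (by nlinarith [mul_self_pos.mpr hre])] at hpos
  have : I * Q / w₀ = 0 := by
    push_cast at hneg hpos
    linear_combination hneg - hpos
  simp [hw₀, hQ.ne'] at this

end InvGreen

theorem stmt9 (a b α α' β β' : ℝ)
    (ha : a ∈ Ioo (0 : ℝ) 1) (hb : b ∈ Ioo (0 : ℝ) 1) (hαα : α ≠ α') (hββ : β ≠ β')
    (𝒜 ℬ : ℝ) (h𝒜 : 𝒜 = α' - α) (hℬ : ℬ = β' - β)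
    (Dp Dq : ℂ → ℂ)
    (hDp : ∀ w : ℂ, Dp w = ((𝒜 : ℂ) * w + ((1 - 2 * a : ℝ) : ℂ)) ^ 2 + ((4 * a * (1 - a) : ℝ) : ℂ))
    (hDq : ∀ w : ℂ, Dq w = ((ℬ : ℂ) * w + ((1 - 2 * b : ℝ) : ℂ)) ^ 2 + ((4 * b * (1 - b) : ℝ) : ℂ))
    (Ip Iq : Set ℂ)
    (hIp : Ip = {w : ℂ | w.re = -(1 - 2 * a) / 𝒜 ∧ 2 * Real.sqrt (a * (1 - a)) / |𝒜| < |w.im|})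
    (hIq : Iq = {w : ℂ | w.re = -(1 - 2 * b) / ℬ ∧ 2 * Real.sqrt (b * (1 - b)) / |ℬ| < |w.im|})
    (Ω : Set ℂ) (hΩ : Ω = {w : ℂ | w ≠ 0 ∧ w ∉ Ip ∧ Complex.I * w ∉ Iq})
    (BX : ℂ → ℂ)
    (hBX : ∀ w : ℂ, BX w = (((α + α') / 2 : ℝ) : ℂ) + Complex.I * (((β + β') / 2 : ℝ) : ℂ) +
      ((Dp w) ^ ((1 : ℂ) / 2) + (Dq (Complex.I * w)) ^ ((1 : ℂ) / 2)) / (2 * w)) :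
    -- (1) continuity and analyticity
    ContinuousOn BX Ω
    ∧ AnalyticOnNhd ℂ BX {w : ℂ | w ≠ 0 ∧ w ∉ closure Ip ∧ Complex.I * w ∉ closure Iq}
    -- (2) no limit at points of I_p whose rotate lies in I_q
    ∧ (∀ w₀ : ℂ, w₀ ∈ Ip → Complex.I * w₀ ∈ Iq →
        ¬ ∃ L : ℂ, Tendsto BX (nhdsWithin w₀ Ω) (nhds L))
    -- (3) w·B_X(w) → 1 as w → 0
    ∧ Tendsto (fun w => w * BX w) (nhdsWithin 0 Ω) (nhds 1) := by
  obtain ⟨ha0, ha1⟩ := ha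
  obtain ⟨hb0, hb1⟩ := hb
  have h𝒜0 : 𝒜 ≠ 0 := h𝒜 ▸ sub_ne_zero.mpr hαα.symm
  have hℬ0 : ℬ ≠ 0 := hℬ ▸ sub_ne_zero.mpr hββ.symm
  have hdp : 0 < 4 * a * (1 - a) := by nlinarith
  have hdq : 0 < 4 * b * (1 - b) := by nlinarith
  have hcut (x A : ℝ) (hA : A ≠ 0) (hx : 0 ≤ x * (1 - x)) :
      {w : ℂ | w.re = -(1 - 2 * x) / A ∧ 2 * √(x * (1 - x)) / |A| < |w.im|} =
        quadCut A (1 - 2 * x) (4 * x * (1 - x)) := by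
    rw [setOf_re_eq_and_lt_abs_im_eq_quadCut hA (by positivity), mul_pow, Real.sq_sqrt hx]
    ring_nf
  rw [hcut a 𝒜 h𝒜0 (by nlinarith)] at hIp
  rw [hcut b ℬ hℬ0 (by nlinarith)] at hIq
  subst hIp hIq hΩ
  obtain rfl : BX = invGreen 𝒜 (1 - 2 * a) (4 * a * (1 - a)) ℬ (1 - 2 * b) (4 * b * (1 - b))
      (((α + α') / 2 : ℝ) + I * ((β + β') / 2 : ℝ)) :=
    funext fun w => by rw [hBX, hDp, hDq]; rfl
  refine ⟨continuousOn_invGreen hdp hdq, analyticOnNhd_invGreen hdp hdq,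
    fun w₀ hp hq => not_tendsto_invGreen h𝒜0 hℬ0 hdp hdq hp hq, ?_⟩
  have hquad_zero (x A : ℝ) : quad A (1 - 2 * x) (4 * x * (1 - x)) 0 = 1 := by
    simp only [quad, mul_zero, zero_add]; push_cast; ring
  refine ((tendsto_mul_invGreen_zero hdp hdq).mono_left
    (nhdsWithin_mono 0 fun _ hw => hw.1)).trans (le_of_eq (congrArg 𝓝 ?_))
  norm_num [hquad_zero]
end
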